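/- Fix γ ∈ (0, 1/4), n ∈ ℕ, set c_n = n^{−(1/4−γ)}, and let d > 2^n. For every map ALG : Z^n → ℝ^d there exists a probability distribution D on Z such that, with F_D(w) = E_{z∼D}[f_B(w;z)], one has E_{S∼D^n}[F_D(ALG(S))] − inf_{w∈ℝ^d} F_D(w) ≥ c_n/4. -/

import Mathlib

/-!
Let `D_j` be the uniform distribution on `{x | x_j = 0} × {0}`. Its risk is
`F_j(w) = (‖w‖² - w_j²)/4 - (c/2)‖w‖² + max 1 ‖w‖⁴`, with minimum `1 - c/2` at `e_j`; but for
`c ≤ 1/4` no `w` is good for two indices at once: over any set `Z` of at least two indices the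
excess risks sum to at least `(c/2)|Z|`. A sample `S` has the same probability under every `D_j`
with `j` in the set `C(S)` of indices it is consistent with, so summing the expected excess risks
over `j` gives at least `(c/2)(d - mass of the samples with |C(S)| = 1)`. Under `D_j` the other
`d - 1 ≥ 2ⁿ` coordinates are all ruled out with probability `(1 - 2⁻ⁿ)^(d-1) ≤ e⁻¹ < 1/2`, so the
sum is at least `d c/4` and some `D_j` forces excess risk `c/4`.
-/

/-- Instance space `Z = {0,1}^d × {0, e₁, …, e_d}`: the boolean vector encodes `x` and
`Option (Fin d)` encodes `α` (`none ↦ 0`, `some j ↦ e_j`). -/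
abbrev ZB (d : ℕ) := (Fin d → Bool) × Option (Fin d)

/-- The vector `0` (for `none`) or the standard basis vector `e_j` (for `some j`). -/
noncomputable def stdVec (d : ℕ) (a : Option (Fin d)) : EuclideanSpace ℝ (Fin d) :=
  (WithLp.equiv 2 (Fin d → ℝ)).symm (fun j => if a = some j then 1 else 0)

/-- Coordinatewise (Hadamard) product of a vector with a boolean mask `x ∈ {0,1}^d`. -/
noncomputable def hadamard {d : ℕ} (v : EuclideanSpace ℝ (Fin d)) (x : Fin d → Bool) :
    EuclideanSpace ℝ (Fin d) :=
  (WithLp.equiv 2 (Fin d → ℝ)).symm (fun j => v j * (if x j then 1 else 0))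

/-- The constant `c_n = n^{-(1/4 - γ)}`. -/
noncomputable def cN (n : ℕ) (γ : ℝ) : ℝ := (n : ℝ) ^ (-(1/4 - γ))

/-- The loss `f_B(w; (x,α)) = ½‖(w−α)⊙x‖² − (c/2)‖w−α‖² + max{1, ‖w‖⁴}`. -/
noncomputable def fB (d : ℕ) (c : ℝ) (w : EuclideanSpace ℝ (Fin d)) (z : ZB d) : ℝ :=
  1 / 2 * ‖hadamard (w - stdVec d z.2) z.1‖ ^ 2
    - c / 2 * ‖w - stdVec d z.2‖ ^ 2 + max 1 (‖w‖ ^ 4)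

open Finset

section BitFlip

variable {ι : Type*} [DecidableEq ι]

def flipBit (k : ι) : Equiv.Perm (ι → Bool) :=
  Function.Involutive.toPerm (fun x => Function.update x k (!x k)) fun x => by
    ext i
    by_cases hi : i = k
    · subst hi; simp
    · simp [Function.update_of_ne hi]

lemma flipBit_apply (k : ι) (x : ι → Bool) (i : ι) :
    flipBit k x i = if i = k then !x k else x i :=
  Function.update_apply x k (!x k) i

lemma sum_mul_ite_apply_of_flipBit_invariant [Fintype ι] (k : ι) (φ : (ι → Bool) → ℝ)
    (hφ : ∀ x, φ (flipBit k x) = φ x) :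
    ∑ x, φ x * (if x k then 1 else 0) = (∑ x, φ x) / 2 := by
  have hflip : ∑ x, φ x * (if x k then 1 else 0) = ∑ x, φ x * (if x k then 0 else 1) := by
    rw [← Equiv.sum_comp (flipBit k)]
    refine sum_congr rfl fun x _ => ?_
    rw [hφ, flipBit_apply, if_pos rfl]
    cases x k <;> rfl
  have hsplit : ∑ x, φ x * (if x k then 1 else 0) + ∑ x, φ x * (if x k then 0 else 1) =
      ∑ x, φ x := by
    rw [← sum_add_distrib]
    refine sum_congr rfl fun x _ => ?_
    cases x k <;> simp
  linarith

lemma sum_ite_apply_eq_false [Fintype ι] (j : ι) :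
    ∑ x : ι → Bool, (if x j = false then 1 else 0 : ℝ) = 2 ^ Fintype.card ι / 2 := by
  have h := sum_mul_ite_apply_of_flipBit_invariant j (fun _ => 1) fun _ => rfl
  have hsplit : ∑ x : ι → Bool, (if x j = false then 1 else 0 : ℝ) =
      ∑ _x : ι → Bool, (1 : ℝ) - ∑ x : ι → Bool, 1 * (if x j then 1 else 0 : ℝ) := by
    rw [← sum_sub_distrib]
    refine sum_congr rfl fun x _ => ?_
    cases x j <;> simp
  simp only [sum_const, card_univ, Fintype.card_fun, Fintype.card_bool, nsmul_eq_mul,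
    mul_one, Nat.cast_pow, Nat.cast_ofNat] at h hsplit ⊢
  linarith

lemma sum_ite_apply_eq_false_mul_ite_apply [Fintype ι] {j k : ι} (hjk : k ≠ j) :
    ∑ x : ι → Bool, (if x j = false then 1 else 0 : ℝ) * (if x k then 1 else 0) =
      2 ^ Fintype.card ι / 4 := by
  rw [sum_mul_ite_apply_of_flipBit_invariant k _ fun x => by rw [flipBit_apply, if_neg hjk.symm],
    sum_ite_apply_eq_false]
  ring

end BitFlip

section HardDistributions

variable {d : ℕ}

lemma norm_sq_eq_sum_sq (v : EuclideanSpace ℝ (Fin d)) : ‖v‖ ^ 2 = ∑ k, v k ^ 2 := by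
  simp [EuclideanSpace.norm_sq_eq, sq_abs]

lemma stdVec_none : stdVec d none = 0 := by
  ext k; simp [stdVec]

lemma stdVec_some_apply (j k : Fin d) : stdVec d (some j) k = if k = j then 1 else 0 := by
  simp [stdVec, eq_comm]

lemma fB_none (c : ℝ) (w : EuclideanSpace ℝ (Fin d)) (x : Fin d → Bool) :
    fB d c w (x, none) =
      (∑ k, w k ^ 2 * (if x k then 1 else 0)) / 2 - c / 2 * ‖w‖ ^ 2 + max 1 (‖w‖ ^ 4) := by
  have h : ‖hadamard w x‖ ^ 2 = ∑ k, w k ^ 2 * (if x k then 1 else 0) := by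
    rw [norm_sq_eq_sum_sq]
    refine sum_congr rfl fun k _ => ?_
    rw [show hadamard w x k = w k * (if x k then 1 else 0) from rfl]
    cases x k <;> simp
  simp only [fB, stdVec_none, sub_zero, h]
  ring

/-- The population risk `F_D` of the distribution `D` with weights `q`. -/
noncomputable def popRisk (q : ZB d → ℝ) (c : ℝ) (w : EuclideanSpace ℝ (Fin d)) : ℝ :=
  ∑ z, q z * fB d c w z

noncomputable def hardDist (j : Fin d) (z : ZB d) : ℝ :=
  if z.1 j = false ∧ z.2 = none then ((2 : ℝ) ^ (d - 1))⁻¹ else 0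

lemma hardDist_nonneg (j : Fin d) (z : ZB d) : 0 ≤ hardDist j z := by
  unfold hardDist; split_ifs <;> positivity

lemma sum_hardDist_mul (j : Fin d) (g : ZB d → ℝ) :
    ∑ z, hardDist j z * g z =
      ((2 : ℝ) ^ (d - 1))⁻¹ * ∑ x : Fin d → Bool, (if x j = false then 1 else 0) * g (x, none) := by
  rw [Fintype.sum_prod_type, mul_sum]
  refine sum_congr rfl fun x _ => ?_
  rw [sum_eq_single none (fun a _ ha => by simp [hardDist, ha]) (by simp)]
  by_cases hx : x j = false <;> simp [hardDist, hx]

lemma sum_hardDist (j : Fin d) : ∑ z, hardDist j z = 1 := by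
  have h := sum_hardDist_mul j 1
  simp only [Pi.one_apply, mul_one] at h
  rw [h, sum_ite_apply_eq_false, Fintype.card_fin, pow_sub₀ _ two_ne_zero j.pos, pow_one]
  field_simp

lemma popRisk_hardDist (c : ℝ) (j : Fin d) (w : EuclideanSpace ℝ (Fin d)) :
    popRisk (hardDist j) c w =
      (‖w‖ ^ 2 - w j ^ 2) / 4 - c / 2 * ‖w‖ ^ 2 + max 1 (‖w‖ ^ 4) := by
  have hcoord : ∀ k, ∑ x : Fin d → Bool, (if x j = false then 1 else 0 : ℝ) * (if x k then 1 else 0)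
      = if k = j then 0 else 2 ^ d / 4 := by
    intro k
    split_ifs with hk
    · subst hk; exact sum_eq_zero fun x _ => by cases x k <;> simp
    · simpa using sum_ite_apply_eq_false_mul_ite_apply hk
  have hx : ∀ x : Fin d → Bool, (if x j = false then 1 else 0 : ℝ) * fB d c w (x, none) =
      (∑ k, w k ^ 2 / 2 * ((if x j = false then 1 else 0) * (if x k then 1 else 0)))
        + (if x j = false then 1 else 0) * (max 1 (‖w‖ ^ 4) - c / 2 * ‖w‖ ^ 2) := by
    intro x
    have hmask : (if x j = false then 1 else 0 : ℝ) * ∑ k, w k ^ 2 * (if x k then 1 else 0) / 2 =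
        ∑ k, w k ^ 2 / 2 * ((if x j = false then 1 else 0) * (if x k then 1 else 0)) := by
      rw [mul_sum]; exact sum_congr rfl fun k _ => by ring
    rw [fB_none, sum_div]
    linear_combination hmask
  rw [popRisk, sum_hardDist_mul, sum_congr rfl fun x _ => hx x, sum_add_distrib, sum_comm,
    ← sum_mul]
  simp only [← mul_sum, hcoord, sum_ite_apply_eq_false]
  have hoff : ∑ k, w k ^ 2 / 2 * (if k = j then 0 else 2 ^ d / 4 : ℝ) =
      2 ^ d / 8 * (‖w‖ ^ 2 - w j ^ 2) := by
    have hk : ∀ k, w k ^ 2 / 2 * (if k = j then 0 else 2 ^ d / 4 : ℝ) =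
        2 ^ d / 8 * (w k ^ 2 - if k = j then w k ^ 2 else 0) := fun k => by
      split_ifs <;> ring
    rw [sum_congr rfl fun k _ => hk k, ← mul_sum, sum_sub_distrib, sum_ite_eq' univ j,
      if_pos (mem_univ j), norm_sq_eq_sum_sq]
  rw [hoff, Fintype.card_fin, pow_sub₀ _ two_ne_zero j.pos, pow_one]
  field_simp
  ring

end HardDistributions

section RiskBounds

variable {d : ℕ} {c : ℝ}

lemma one_sub_div_two_le_popRisk_hardDist (hc0 : 0 ≤ c) (hc : c ≤ 4) (j : Fin d)
    (w : EuclideanSpace ℝ (Fin d)) : 1 - c / 2 ≤ popRisk (hardDist j) c w := by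
  have hwj : w j ^ 2 ≤ ‖w‖ ^ 2 := by
    rw [norm_sq_eq_sum_sq]
    exact single_le_sum (fun k _ => sq_nonneg (w k)) (mem_univ j)
  rw [popRisk_hardDist]
  rcases le_total (‖w‖ ^ 2) 1 with h | h
  · nlinarith [le_max_left 1 (‖w‖ ^ 4)]
  · nlinarith [le_max_right 1 (‖w‖ ^ 4)]

lemma popRisk_hardDist_stdVec (j : Fin d) :
    popRisk (hardDist j) c (stdVec d (some j)) = 1 - c / 2 := by
  have hnorm : ‖stdVec d (some j)‖ ^ 2 = 1 := by
    simp [norm_sq_eq_sum_sq, stdVec_some_apply]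
  have hnorm4 : ‖stdVec d (some j)‖ ^ 4 = 1 := by
    rw [show 4 = 2 * 2 from rfl, pow_mul, hnorm, one_pow]
  rw [popRisk_hardDist, hnorm, hnorm4, stdVec_some_apply, if_pos rfl, max_self]
  ring

lemma iInf_popRisk_hardDist (hc0 : 0 ≤ c) (hc : c ≤ 4) (j : Fin d) :
    ⨅ w, popRisk (hardDist j) c w = 1 - c / 2 :=
  le_antisymm ((ciInf_le ⟨1 - c / 2, Set.forall_mem_range.2
      (one_sub_div_two_le_popRisk_hardDist hc0 hc j)⟩ _).trans_eq (popRisk_hardDist_stdVec j))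
    (le_ciInf (one_sub_div_two_le_popRisk_hardDist hc0 hc j))

/-- No single point is nearly optimal for two of the hard distributions at once. -/
lemma card_le_sum_popRisk_hardDist (hc : c ≤ 1 / 4) (w : EuclideanSpace ℝ (Fin d))
    {Z : Finset (Fin d)} (hZ : 2 ≤ #Z) : (#Z : ℝ) ≤ ∑ j ∈ Z, popRisk (hardDist j) c w := by
  have hZw : ∑ j ∈ Z, w j ^ 2 ≤ ‖w‖ ^ 2 := by
    rw [norm_sq_eq_sum_sq]
    exact sum_le_sum_of_subset_of_nonneg (subset_univ Z) fun k _ _ => sq_nonneg (w k)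
  have hZ' : (2 : ℝ) ≤ #Z := by exact_mod_cast hZ
  simp only [popRisk_hardDist, sum_add_distrib, sum_sub_distrib, ← sum_div, sum_const,
    nsmul_eq_mul]
  have hcoef : 0 ≤ #Z * (1 / 4 - c / 2) - 1 / 4 := by nlinarith
  nlinarith [mul_nonneg (sq_nonneg ‖w‖) hcoef,
    mul_le_mul_of_nonneg_left (le_max_left 1 (‖w‖ ^ 4)) (by positivity : (0 : ℝ) ≤ #Z)]

lemma sum_popRisk_hardDist_sub_ge (hc0 : 0 ≤ c) (hc : c ≤ 1 / 4)
    (w : EuclideanSpace ℝ (Fin d)) (Z : Finset (Fin d)) :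
    c / 2 * (#Z - if #Z = 1 then 1 else 0) ≤ ∑ j ∈ Z, (popRisk (hardDist j) c w - (1 - c / 2)) := by
  rcases lt_or_ge #Z 2 with hZ | hZ
  · have hmin : ∀ j ∈ Z, 0 ≤ popRisk (hardDist j) c w - (1 - c / 2) := fun j _ =>
      sub_nonneg.2 (one_sub_div_two_le_popRisk_hardDist hc0 (by linarith) j w)
    interval_cases h : #Z
    · simp [card_eq_zero.1 h]
    · simpa using sum_nonneg hmin
  · rw [if_neg (by omega), sum_sub_distrib, sum_const, nsmul_eq_mul]
    linarith [card_le_sum_popRisk_hardDist hc w hZ]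

end RiskBounds

section Samples

variable {n d : ℕ}

def consistentCoords (S : Fin n → ZB d) : Finset (Fin d) :=
  {j | ∀ i, (S i).1 j = false ∧ (S i).2 = none}

lemma prod_hardDist (j : Fin d) (S : Fin n → ZB d) :
    ∏ i, hardDist j (S i) = if j ∈ consistentCoords S then ((2 : ℝ) ^ (d - 1))⁻¹ ^ n else 0 := by
  simp only [hardDist, prod_ite_zero, prod_const, card_univ, Fintype.card_fin, consistentCoords,
    mem_filter, mem_univ, true_and, forall_const]

lemma sum_prod_hardDist (j : Fin d) : ∑ S : Fin n → ZB d, ∏ i, hardDist j (S i) = 1 := by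
  rw [← Fintype.sum_pow, sum_hardDist, one_pow]

lemma sum_prod_hardDist_mul (S : Fin n → ZB d) (g : Fin d → ℝ) :
    ∑ j, (∏ i, hardDist j (S i)) * g j =
      ((2 : ℝ) ^ (d - 1))⁻¹ ^ n * ∑ j ∈ consistentCoords S, g j := by
  simp only [prod_hardDist, ite_mul, zero_mul, sum_ite_mem, univ_inter, mul_sum]

/-- A sample consistent with `j` alone has a nonzero column at every other coordinate. -/
lemma card_consistentCoords_eq_singleton_le (j : Fin d) :
    #{S : Fin n → ZB d | consistentCoords S = {j}} ≤ (2 ^ n - 1) ^ (d - 1) := by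
  have hmem : ∀ {S : Fin n → ZB d} {k}, consistentCoords S = {j} →
      ((∀ i, (S i).1 k = false ∧ (S i).2 = none) ↔ k = j) := fun hS => by
    rw [← mem_singleton, ← hS, consistentCoords, mem_filter, and_iff_right (mem_univ _)]
  let column : {S : Fin n → ZB d // consistentCoords S = {j}} →
      ({k // k ≠ j} → {y : Fin n → Bool // y ≠ fun _ => false}) := fun S k =>
    ⟨fun i => (S.1 i).1 k, fun h0 => k.2 <| (hmem S.2).1 fun i =>
      ⟨congrFun h0 i, ((hmem S.2).2 rfl i).2⟩⟩
  have hinj : column.Injective := by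
    rintro ⟨S, hS⟩ ⟨S', hS'⟩ h
    ext1
    funext i
    refine Prod.ext (funext fun k => ?_) (((hmem hS).2 rfl i).2.trans ((hmem hS').2 rfl i).2.symm)
    by_cases hk : k = j
    · subst hk; exact ((hmem hS).2 rfl i).1.trans ((hmem hS').2 rfl i).1.symm
    · exact congrFun (congrArg Subtype.val (congrFun h ⟨k, hk⟩)) i
  rw [← Fintype.card_subtype]
  calc Fintype.card {S : Fin n → ZB d // consistentCoords S = {j}}
      ≤ Fintype.card ({k // k ≠ j} → {y : Fin n → Bool // y ≠ fun _ => false}) :=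
        Fintype.card_le_of_injective column hinj
    _ = (2 ^ n - 1) ^ (d - 1) := by simp [Fintype.card_subtype_compl]

lemma card_consistentCoords_eq_one_le :
    #{S : Fin n → ZB d | #(consistentCoords S) = 1} ≤ d * (2 ^ n - 1) ^ (d - 1) := by
  calc #{S : Fin n → ZB d | #(consistentCoords S) = 1}
      ≤ #(univ.biUnion fun j : Fin d => {S : Fin n → ZB d | consistentCoords S = {j}}) := by
        refine card_le_card fun S hS => ?_
        obtain ⟨j, hj⟩ := card_eq_one.1 (mem_filter.1 hS).2
        exact mem_biUnion.2 ⟨j, mem_univ j, mem_filter.2 ⟨mem_univ S, hj⟩⟩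
    _ ≤ ∑ j : Fin d, #{S : Fin n → ZB d | consistentCoords S = {j}} := card_biUnion_le
    _ ≤ ∑ _j : Fin d, (2 ^ n - 1) ^ (d - 1) :=
        sum_le_sum fun j _ => card_consistentCoords_eq_singleton_le j
    _ = d * (2 ^ n - 1) ^ (d - 1) := by simp

lemma one_sub_inv_pow_le_half {m : ℝ} (hm : 1 ≤ m) {k : ℕ} (hk : m ≤ k) :
    (1 - m⁻¹) ^ k ≤ 1 / 2 := by
  have hm0 : 0 < m := by linarith
  calc (1 - m⁻¹) ^ k ≤ Real.exp (-m⁻¹) ^ k :=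
        pow_le_pow_left₀ (sub_nonneg.2 (inv_le_one_of_one_le₀ hm))
          (by linarith [Real.add_one_le_exp (-m⁻¹)]) k
    _ = Real.exp (-(k / m)) := by rw [← Real.exp_nat_mul]; ring_nf
    _ ≤ Real.exp (-1) := Real.exp_le_exp.2 (neg_le_neg ((one_le_div hm0).2 hk))
    _ ≤ 1 / 2 := by
        rw [Real.exp_neg, one_div]
        exact inv_anti₀ two_pos (by linarith [Real.exp_one_gt_d9])

lemma mass_consistentCoords_eq_one_le (hd : 2 ^ n < d) :
    ((2 : ℝ) ^ (d - 1))⁻¹ ^ n * #{S : Fin n → ZB d | #(consistentCoords S) = 1} ≤ d / 2 := by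
  have hcard : (#{S : Fin n → ZB d | #(consistentCoords S) = 1} : ℝ) ≤
      d * ((2 : ℝ) ^ n - 1) ^ (d - 1) := by
    have h := card_consistentCoords_eq_one_le (n := n) (d := d)
    rw [← Nat.cast_le (α := ℝ)] at h
    simpa [Nat.cast_sub Nat.one_le_two_pow] using h
  have hpow : ((2 : ℝ) ^ (d - 1))⁻¹ ^ n * ((2 : ℝ) ^ n - 1) ^ (d - 1) =
      (1 - ((2 : ℝ) ^ n)⁻¹) ^ (d - 1) := by
    rw [inv_pow, ← pow_mul, mul_comm (d - 1), pow_mul, ← inv_pow, ← mul_pow, mul_sub, mul_one,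
      inv_mul_cancel₀ (by positivity)]
  have hhalf : (1 - ((2 : ℝ) ^ n)⁻¹) ^ (d - 1) ≤ 1 / 2 :=
    one_sub_inv_pow_le_half (one_le_pow₀ one_le_two) (by exact_mod_cast (by omega : 2 ^ n ≤ d - 1))
  calc ((2 : ℝ) ^ (d - 1))⁻¹ ^ n * #{S : Fin n → ZB d | #(consistentCoords S) = 1}
      ≤ ((2 : ℝ) ^ (d - 1))⁻¹ ^ n * (d * ((2 : ℝ) ^ n - 1) ^ (d - 1)) :=
        mul_le_mul_of_nonneg_left hcard (by positivity)
    _ = d * (1 - ((2 : ℝ) ^ n)⁻¹) ^ (d - 1) := by rw [mul_left_comm, hpow]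
    _ ≤ d / 2 := by rw [div_eq_mul_one_div]; gcongr

end Samples

section ExcessRisk

variable {n d : ℕ} {c : ℝ}

/-- `E_{S∼Dⁿ}[F_D(ALG S)] - inf_w F_D(w)` for the distribution `D` with weights `q`. -/
noncomputable def excessRisk (q : ZB d → ℝ) (c : ℝ)
    (ALG : (Fin n → ZB d) → EuclideanSpace ℝ (Fin d)) : ℝ :=
  ∑ S : Fin n → ZB d, (∏ i, q (S i)) * popRisk q c (ALG S) - ⨅ w, popRisk q c w

lemma excessRisk_hardDist (hc0 : 0 ≤ c) (hc : c ≤ 4)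
    (ALG : (Fin n → ZB d) → EuclideanSpace ℝ (Fin d)) (j : Fin d) :
    excessRisk (hardDist j) c ALG =
      ∑ S, (∏ i, hardDist j (S i)) * (popRisk (hardDist j) c (ALG S) - (1 - c / 2)) := by
  simp only [excessRisk, iInf_popRisk_hardDist hc0 hc j, mul_sub, sum_sub_distrib, ← sum_mul,
    sum_prod_hardDist, one_mul]

lemma sum_excessRisk_hardDist_ge (hc0 : 0 ≤ c) (hc : c ≤ 1 / 4) (hd : 2 ^ n < d)
    (ALG : (Fin n → ZB d) → EuclideanSpace ℝ (Fin d)) :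
    d * (c / 4) ≤ ∑ j, excessRisk (hardDist j) c ALG := by
  set ρ : ℝ := ((2 : ℝ) ^ (d - 1))⁻¹ ^ n
  have hρ : 0 ≤ ρ := by positivity
  have hmass : ∑ S : Fin n → ZB d, ρ * #(consistentCoords S) = d := by
    calc ∑ S : Fin n → ZB d, ρ * #(consistentCoords S)
        = ∑ S : Fin n → ZB d, ∑ j, ∏ i, hardDist j (S i) :=
          sum_congr rfl fun S _ => by
            simpa only [Pi.one_apply, mul_one, sum_const, nsmul_eq_mul] using
              (sum_prod_hardDist_mul S 1).symm
      _ = d := by rw [sum_comm]; simp [sum_prod_hardDist]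
  have hsample : ∀ S : Fin n → ZB d,
      c / 2 * (ρ * #(consistentCoords S) - ρ * if #(consistentCoords S) = 1 then 1 else 0) ≤
        ∑ j, (∏ i, hardDist j (S i)) * (popRisk (hardDist j) c (ALG S) - (1 - c / 2)) := by
    intro S
    rw [sum_prod_hardDist_mul, ← mul_sub, mul_left_comm]
    exact mul_le_mul_of_nonneg_left (sum_popRisk_hardDist_sub_ge hc0 hc _ _) hρ
  have hsingle : ∑ S : Fin n → ZB d, (ρ * if #(consistentCoords S) = 1 then 1 else 0) ≤ d / 2 := by
    rw [← mul_sum, sum_boole]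
    exact mass_consistentCoords_eq_one_le hd
  calc d * (c / 4) ≤ c / 2 * (d - d / 2) := by nlinarith
    _ ≤ c / 2 * ∑ S : Fin n → ZB d,
          (ρ * #(consistentCoords S) - ρ * if #(consistentCoords S) = 1 then 1 else 0) := by
        rw [sum_sub_distrib, hmass]
        gcongr
    _ ≤ ∑ S : Fin n → ZB d, ∑ j,
          (∏ i, hardDist j (S i)) * (popRisk (hardDist j) c (ALG S) - (1 - c / 2)) := by
        rw [mul_sum]
        exact sum_le_sum fun S _ => hsample S
    _ = ∑ j, excessRisk (hardDist j) c ALG := by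
        rw [sum_comm]
        exact sum_congr rfl fun j _ => (excessRisk_hardDist hc0 (by linarith) ALG j).symm

lemma exists_excessRisk_hardDist_ge (hc0 : 0 ≤ c) (hc : c ≤ 1 / 4) (hd : 2 ^ n < d)
    (ALG : (Fin n → ZB d) → EuclideanSpace ℝ (Fin d)) :
    ∃ j, c / 4 ≤ excessRisk (hardDist j) c ALG := by
  have hne : (univ : Finset (Fin d)).Nonempty :=
    univ_nonempty_iff.2 ⟨⟨0, (Nat.zero_le _).trans_lt hd⟩⟩
  obtain ⟨j, -, hj⟩ := exists_le_of_sum_le (f := fun _ => c / 4)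
      (g := fun j => excessRisk (hardDist j) c ALG) hne <| by
    rw [sum_const, card_univ, Fintype.card_fin, nsmul_eq_mul]
    exact sum_excessRisk_hardDist_ge hc0 hc hd ALG
  exact ⟨j, hj⟩

end ExcessRisk

theorem statement13_general (γ : ℝ) (n d : ℕ)
    (hc : cN n γ ≤ 1/4) (hd : 2 ^ n < d)
    (ALG : (Fin n → ZB d) → EuclideanSpace ℝ (Fin d)) :
    ∃ q : ZB d → ℝ, (∀ z, 0 ≤ q z) ∧ (∑ z : ZB d, q z) = 1 ∧
      cN n γ / 4 ≤
        (∑ S : Fin n → ZB d, (∏ i, q (S i)) *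
            (∑ z : ZB d, q z * fB d (cN n γ) (ALG S) z))
          - ⨅ w, ∑ z : ZB d, q z * fB d (cN n γ) w z := by
  obtain ⟨j, hj⟩ :=
    exists_excessRisk_hardDist_ge (Real.rpow_nonneg (Nat.cast_nonneg n) _) hc hd ALG
  exact ⟨hardDist j, hardDist_nonneg j, sum_hardDist j, hj⟩

theorem statement13 (γ : ℝ) (hγ : γ ∈ Set.Ioo (0 : ℝ) (1/4)) (n d : ℕ)
    (hc : cN n γ ≤ 1/4) (hd : 2 ^ n < d)
    (ALG : (Fin n → ZB d) → EuclideanSpace ℝ (Fin d)) :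
    ∃ q : ZB d → ℝ, (∀ z, 0 ≤ q z) ∧ (∑ z : ZB d, q z) = 1 ∧
      cN n γ / 4 ≤
        (∑ S : Fin n → ZB d, (∏ i, q (S i)) *
            (∑ z : ZB d, q z * fB d (cN n γ) (ALG S) z))
          - ⨅ w, ∑ z : ZB d, q z * fB d (cN n γ) w z :=
  statement13_general γ n d hc hd ALG
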